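/- Let S be the signature with a single context u (one exogenous variable with a one-element range), countably infinitely many binary endogenous variables X_1, X_2, … with R(X_i) = {0, 1}, and I = {∅} containing only the empty intervention. Let M be the GSEM over S whose outcome set M(u, ∅) is the set of all assignments in which only finitely many X_i take the value 0, and let M' be the GSEM over S whose outcome set M'(u, ∅) is the set of all assignments in which only finitely many X_i take the value 1. Then M and M' are L(S)-equivalent (they satisfy exactly the same causal formulas of L(S) at u), but M and M' are not equivalent (M(u, ∅) ≠ M'(u, ∅)). -/

import Mathlib

namespace Causal

/-- A signature: exogenous variables `U`, endogenous variables `V`, a universe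
of values `Val`, range functions `RU`, `RV`, and a set `Int` of allowed
interventions (partial assignments of in-range values to endogenous variables). -/
structure Signature : Type 1 where
  U : Type
  V : Type
  Val : Type
  RU : U → Set Val
  RV : V → Set Val
  RU_nonempty : ∀ Y, (RU Y).Nonempty
  RV_nonempty : ∀ X, (RV X).Nonempty
  Int : Set (V → Option Val)
  Int_ok : ∀ I ∈ Int, ∀ X x, I X = some x → x ∈ RV X

variable {S : Signature}

/-- A finite signature: finitely many variables, each with finite range. -/
def Signature.IsFinite (S : Signature) : Prop :=
  Finite S.U ∧ Finite S.V ∧ (∀ Y, (S.RU Y).Finite) ∧ (∀ X, (S.RV X).Finite)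

/-- An intervention is valid if it only sets variables to values in their ranges. -/
def ValidInt (S : Signature) (I : S.V → Option S.Val) : Prop :=
  ∀ X x, I X = some x → x ∈ S.RV X

/-- A universal signature: all (valid) interventions are allowed. -/
def Signature.Universal (S : Signature) : Prop :=
  S.Int = {I | ValidInt S I}

/-- A context: an assignment of in-range values to the exogenous variables. -/
def Context (S : Signature) : Type := {u : S.U → S.Val // ∀ Y, u Y ∈ S.RU Y}

/-- An assignment of in-range values to the endogenous variables (an outcome). -/
def Assignment (S : Signature) : Type := {v : S.V → S.Val // ∀ X, v X ∈ S.RV X}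

open Classical in
/-- `updInt I X x` is the intervention `I; X ← x`. -/
noncomputable def updInt (I : S.V → Option S.Val) (X : S.V) (x : S.Val) :
    S.V → Option S.Val :=
  fun Y => if Y = X then some x else I Y

/-- Events: Boolean combinations of primitive events `X = x` (with `x ∈ R(X)`). -/
inductive Event (S : Signature) : Type where
  | tru : Event S
  | prim : (X : S.V) → (x : S.Val) → x ∈ S.RV X → Event S
  | not : Event S → Event S
  | and : Event S → Event S → Event S
  | or : Event S → Event S → Event S

namespace Event

def imp (a b : Event S) : Event S := Event.or (Event.not a) b

/-- Satisfaction of an event by an assignment. -/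
def sat (v : Assignment S) : Event S → Prop
  | .tru => True
  | .prim X x _ => v.1 X = x
  | .not e => ¬ Event.sat v e
  | .and a b => Event.sat v a ∧ Event.sat v b
  | .or a b => Event.sat v a ∨ Event.sat v b

/-- Boolean evaluation of an event under an arbitrary valuation of its atoms;
used to define propositional tautologies. -/
def evalB (val : S.V → S.Val → Bool) : Event S → Bool
  | .tru => true
  | .prim X x _ => val X x
  | .not e => !(Event.evalB val e)
  | .and a b => Event.evalB val a && Event.evalB val b
  | .or a b => Event.evalB val a || Event.evalB val b

/-- An event is a propositional tautology if it is true under every Boolean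
valuation of its primitive events. -/
def Taut (e : Event S) : Prop := ∀ val, Event.evalB val e = true

/-- The value `x` of variable `X` is mentioned in the event. -/
def mentionsVal (X : S.V) (x : S.Val) : Event S → Prop
  | .tru => False
  | .prim X' x' _ => X' = X ∧ x' = x
  | .not e => Event.mentionsVal X x e
  | .and a b => Event.mentionsVal X x a ∨ Event.mentionsVal X x b
  | .or a b => Event.mentionsVal X x a ∨ Event.mentionsVal X x b

def bigAnd (l : List (Event S)) : Event S := l.foldr Event.and Event.tru

def bigOr (l : List (Event S)) : Event S := l.foldr Event.or (Event.not Event.tru)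

/-- The disjunction `⋁_{x ∈ l} X = x`. -/
def disjEq (X : S.V) (l : List {x : S.Val // x ∈ S.RV X}) : Event S :=
  bigOr (l.map fun x => Event.prim X x.1 x.2)

/-- The conjunction `⋀ X = x` over a list of (variable, value) pairs. -/
def conjEqL (l : List ((X : S.V) × {x : S.Val // x ∈ S.RV X})) : Event S :=
  bigAnd (l.map fun p => Event.prim p.1 p.2.1 p.2.2)

/-- Conjunctive formulas: conjunctions of literals `X = x` and `X ≠ x`. -/
inductive Conjunctive : Event S → Prop
  | tru : Conjunctive Event.tru
  | eq (X x hx) : Conjunctive (Event.prim X x hx)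
  | ne (X x hx) : Conjunctive (Event.not (Event.prim X x hx))
  | and {a b} : Conjunctive a → Conjunctive b → Conjunctive (Event.and a b)

/-- The set of conjuncts of a (conjunctive) formula. -/
def conjuncts : Event S → Set (Event S)
  | .tru => ∅
  | .and a b => Event.conjuncts a ∪ Event.conjuncts b
  | e => {e}

/-- Membership in the restricted language: only named variables and named values. -/
def InLang (W : Set S.V) (R' : S.V → Set S.Val) : Event S → Prop
  | .tru => True
  | .prim X x _ => X ∈ W ∧ x ∈ R' X
  | .not e => Event.InLang W R' e
  | .and a b => Event.InLang W R' a ∧ Event.InLang W R' b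
  | .or a b => Event.InLang W R' a ∧ Event.InLang W R' b

end Event

/-- Causal formulas: Boolean combinations of atomic formulas `[Y ← y]φ`
with `Y ← y` an allowed intervention and `φ` an event. -/
inductive CForm (S : Signature) : Type where
  | tru : CForm S
  | box : (I : S.V → Option S.Val) → I ∈ S.Int → Event S → CForm S
  | not : CForm S → CForm S
  | and : CForm S → CForm S → CForm S
  | or : CForm S → CForm S → CForm S

namespace CForm

def imp (a b : CForm S) : CForm S := CForm.or (CForm.not a) b

def iff (a b : CForm S) : CForm S := CForm.and (imp a b) (imp b a)

/-- `⟨Y ← y⟩φ` abbreviates `¬[Y ← y]¬φ`. -/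
def dia (I : S.V → Option S.Val) (hI : I ∈ S.Int) (e : Event S) : CForm S :=
  CForm.not (CForm.box I hI (Event.not e))

/-- Satisfaction of a causal formula at a context, relative to an outcome map `O`. -/
def sat (O : (I : S.V → Option S.Val) → I ∈ S.Int → Context S → Set (Assignment S))
    (u : Context S) : CForm S → Prop
  | .tru => True
  | .box I hI e => ∀ v ∈ O I hI u, e.sat v
  | .not φ => ¬ CForm.sat O u φ
  | .and a b => CForm.sat O u a ∧ CForm.sat O u b
  | .or a b => CForm.sat O u a ∨ CForm.sat O u b

/-- Boolean evaluation of a causal formula under an arbitrary valuation of its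
atomic formulas; used to define propositional tautologies. -/
def evalB (val : (S.V → Option S.Val) → Event S → Bool) : CForm S → Bool
  | .tru => true
  | .box I _ e => val I e
  | .not φ => !(CForm.evalB val φ)
  | .and a b => CForm.evalB val a && CForm.evalB val b
  | .or a b => CForm.evalB val a || CForm.evalB val b

/-- A causal formula is an instance of a propositional tautology if it is true
under every Boolean valuation of its atomic formulas. -/
def Taut (φ : CForm S) : Prop := ∀ val, CForm.evalB val φ = true

/-- The value `x` of variable `X` is mentioned in the causal formula
(either in a primitive event or in an intervention). -/
def mentionsVal (X : S.V) (x : S.Val) : CForm S → Prop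
  | .tru => False
  | .box I _ e => I X = some x ∨ e.mentionsVal X x
  | .not φ => CForm.mentionsVal X x φ
  | .and a b => CForm.mentionsVal X x a ∨ CForm.mentionsVal X x b
  | .or a b => CForm.mentionsVal X x a ∨ CForm.mentionsVal X x b

def bigAnd (l : List (CForm S)) : CForm S := l.foldr CForm.and CForm.tru

def bigOr (l : List (CForm S)) : CForm S := l.foldr CForm.or (CForm.not CForm.tru)

/-- Membership in the restricted language `L_{W,R',I'}(S)`. -/
def InLang (W : Set S.V) (R' : S.V → Set S.Val) (I' : Set (S.V → Option S.Val)) :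
    CForm S → Prop
  | .tru => True
  | .box I _ e => I ∈ I' ∧ e.InLang W R'
  | .not φ => CForm.InLang W R' I' φ
  | .and a b => CForm.InLang W R' I' a ∧ CForm.InLang W R' I' b
  | .or a b => CForm.InLang W R' I' a ∧ CForm.InLang W R' I' b

end CForm

/-- A structural equations model over `S`: each endogenous variable gets an
equation determining its value from the values of all other variables
(formally, `F X u v` does not depend on `v X`). -/
structure SEM (S : Signature) where
  F : S.V → (S.U → S.Val) → (S.V → S.Val) → S.Val
  F_range : ∀ X uu vv, F X uu vv ∈ S.RV X
  F_indep_self : ∀ X uu vv vv', (∀ Y, Y ≠ X → vv Y = vv' Y) → F X uu vv = F X uu vv'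

namespace SEM

/-- The outcomes of a SEM under an intervention: solutions of the modified equations. -/
def outcomes (M : SEM S) (u : Context S) (I : S.V → Option S.Val) :
    Set (Assignment S) :=
  {v | ∀ X, (∀ x, I X = some x → v.1 X = x) ∧ (I X = none → v.1 X = M.F X u.1 v.1)}

def sat (M : SEM S) (u : Context S) (φ : CForm S) : Prop :=
  φ.sat (fun I _ u' => M.outcomes u' I) u

def Valid (M : SEM S) (φ : CForm S) : Prop := ∀ u, M.sat u φ

/-- `X` is independent of `Y` in context `uu`: the equation for `X` does not
depend on the value of `Y`. -/
def IndepAt (M : SEM S) (uu : S.U → S.Val) (X Y : S.V) : Prop :=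
  ∀ vv vv', (∀ Z, Z ≠ Y → vv Z = vv' Z) → M.F X uu vv = M.F X uu vv'

/-- An acyclic (recursive) SEM. -/
def Acyclic (M : SEM S) : Prop :=
  ∀ u : Context S, ∃ lt : S.V → S.V → Prop, IsStrictTotalOrder S.V lt ∧
    ∀ X Y, lt X Y → M.IndepAt u.1 X Y

end SEM

/-- A generalized structural equations model: an arbitrary (effective) map from
allowed interventions and contexts to sets of outcomes. -/
structure GSEM (S : Signature) where
  F : (I : S.V → Option S.Val) → I ∈ S.Int → Context S → Set (Assignment S)
  effective : ∀ I hI u v, v ∈ F I hI u → ∀ X x, I X = some x → v.1 X = x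

namespace GSEM

def sat (M : GSEM S) (u : Context S) (φ : CForm S) : Prop :=
  φ.sat M.F u

def Valid (M : GSEM S) (φ : CForm S) : Prop := ∀ u, M.sat u φ

/-- A finitary GSEM: all outcome sets are finite. -/
def Finitary (M : GSEM S) : Prop := ∀ I hI u, (M.F I hI u).Finite

end GSEM

/-- Equivalence of two GSEMs: same outcomes for all contexts and allowed interventions. -/
def GSEM.equiv (M M' : GSEM S) : Prop := ∀ I hI u, M.F I hI u = M'.F I hI u

/-- `L(S)`-equivalence of two GSEMs: they agree on all causal formulas. -/
def GSEM.LEquiv (M M' : GSEM S) : Prop := ∀ u φ, M.sat u φ ↔ M'.sat u φ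

/-- Equivalence of a SEM and a GSEM. -/
def SEM.equivGSEM (M : SEM S) (M' : GSEM S) : Prop :=
  ∀ (I : S.V → Option S.Val) (hI : I ∈ S.Int) (u : Context S),
    M.outcomes u I = M'.F I hI u

/-- The projection of an outcome set to a single variable. -/
def projSet (T : Set (Assignment S)) (Y : S.V) : Set S.Val := (fun v => v.1 Y) '' T

/-- The restriction of an outcome set to a set of variables. -/
def restrictSet (T : Set (Assignment S)) (Wv : Set S.V) : Set (Wv → S.Val) :=
  (fun (v : Assignment S) (Y : Wv) => v.1 Y.1) '' T

/-! ### Axiom schemas -/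

/-- D0: all instances of propositional tautologies. -/
def AxD0 (S : Signature) : Set (CForm S) := {φ | φ.Taut}

/-- D1 (functionality): `[Y ← y](X = x ⇒ X ≠ x')` for `x ≠ x'`. -/
def AxD1 (S : Signature) : Set (CForm S) :=
  {φ | ∃ (I : S.V → Option S.Val) (hI : I ∈ S.Int) (X : S.V) (x x' : S.Val)
      (hx : x ∈ S.RV X) (hx' : x' ∈ S.RV X), x ≠ x' ∧
    φ = CForm.box I hI (Event.imp (Event.prim X x hx) (Event.not (Event.prim X x' hx')))}

/-- D2 (definiteness): `[Y ← y](⋁_{x ∈ R(X)} X = x)`. -/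
def AxD2 (S : Signature) : Set (CForm S) :=
  {φ | ∃ (I : S.V → Option S.Val) (hI : I ∈ S.Int) (X : S.V)
      (l : List {x : S.Val // x ∈ S.RV X}),
    (∀ x : {x : S.Val // x ∈ S.RV X}, x ∈ l) ∧ φ = CForm.box I hI (Event.disjEq X l)}

/-- D3 (composition): `⟨X ← x⟩(W = w ∧ φ) ⇒ ⟨X ← x; W ← w⟩φ`. -/
def AxD3 (S : Signature) : Set (CForm S) :=
  {ψ | ∃ (I : S.V → Option S.Val) (hI : I ∈ S.Int) (W : S.V) (w : S.Val)
      (hw : w ∈ S.RV W) (hIW : updInt I W w ∈ S.Int) (e : Event S),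
    ψ = CForm.imp (CForm.dia I hI (Event.and (Event.prim W w hw) e))
          (CForm.dia (updInt I W w) hIW e)}

/-- D4 (effectiveness): `[X ← x](X = x)`. -/
def AxD4 (S : Signature) : Set (CForm S) :=
  {φ | ∃ (I : S.V → Option S.Val) (hI : I ∈ S.Int) (X : S.V) (x : S.Val)
      (hx : x ∈ S.RV X), I X = some x ∧ φ = CForm.box I hI (Event.prim X x hx)}

/-- D5 (reversibility), with `Z = V − (X ∪ {W, Y})`. -/
def AxD5 (S : Signature) : Set (CForm S) :=
  {φ | ∃ (I : S.V → Option S.Val) (hI : I ∈ S.Int) (Y : S.V) (y : S.Val)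
      (hy : y ∈ S.RV Y) (W : S.V) (w : S.Val) (hw : w ∈ S.RV W)
      (hIY : updInt I Y y ∈ S.Int) (hIW : updInt I W w ∈ S.Int)
      (lZ : List ((X : S.V) × {x : S.Val // x ∈ S.RV X})),
    (lZ.map Sigma.fst).Nodup ∧
    (∀ Z : S.V, (∃ p ∈ lZ, p.1 = Z) ↔ (I Z = none ∧ Z ≠ W ∧ Z ≠ Y)) ∧
    φ = CForm.imp
      (CForm.and
        (CForm.dia (updInt I Y y) hIY (Event.and (Event.prim W w hw) (Event.conjEqL lZ)))
        (CForm.dia (updInt I W w) hIW (Event.and (Event.prim Y y hy) (Event.conjEqL lZ))))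
      (CForm.dia I hI (Event.and (Event.prim W w hw)
        (Event.and (Event.prim Y y hy) (Event.conjEqL lZ))))}

/-- A disjunct of the formula `Y ⇝ Z` ("Y affects Z"). -/
noncomputable def ltComp (I : S.V → Option S.Val) (hI : I ∈ S.Int) (Y : S.V) (y : S.Val)
    (hIY : updInt I Y y ∈ S.Int) (Z : S.V) (z z' : S.Val)
    (hz : z ∈ S.RV Z) (hz' : z' ∈ S.RV Z) : CForm S :=
  CForm.and (CForm.box I hI (Event.prim Z z hz))
    (CForm.box (updInt I Y y) hIY (Event.prim Z z' hz'))

/-- `φ` is (an instance of) the formula `Y ⇝ Z`: the disjunction, over all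
interventions `X ← x`, values `y ∈ R(Y)` and `z ≠ z' ∈ R(Z)`, of
`[X ← x](Z = z) ∧ [X ← x; Y ← y](Z = z')`. -/
def IsLeadsTo (Y Z : S.V) (φ : CForm S) : Prop :=
  ∃ l : List (CForm S),
    (∀ ψ ∈ l, ∃ (I : S.V → Option S.Val) (hI : I ∈ S.Int) (y : S.Val)
        (_ : y ∈ S.RV Y) (hIY : updInt I Y y ∈ S.Int) (z z' : S.Val)
        (hz : z ∈ S.RV Z) (hz' : z' ∈ S.RV Z), z ≠ z' ∧
        ψ = ltComp I hI Y y hIY Z z z' hz hz') ∧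
    (∀ (I : S.V → Option S.Val) (hI : I ∈ S.Int) (y : S.Val), y ∈ S.RV Y →
      ∀ (hIY : updInt I Y y ∈ S.Int) (z z' : S.Val) (hz : z ∈ S.RV Z)
        (hz' : z' ∈ S.RV Z), z ≠ z' →
        ltComp I hI Y y hIY Z z z' hz hz' ∈ l) ∧
    φ = CForm.bigOr l

/-- D6 (recursiveness): `(X₀ ⇝ X₁ ∧ … ∧ X_{k−1} ⇝ X_k) ⇒ ¬(X_k ⇝ X₀)`. -/
def AxD6 (S : Signature) : Set (CForm S) :=
  {φ | ∃ (k : ℕ) (Xs : Fin (k+1) → S.V) (fs : Fin k → CForm S) (g : CForm S),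
    (∀ i : Fin k, IsLeadsTo (Xs i.castSucc) (Xs i.succ) (fs i)) ∧
    IsLeadsTo (Xs (Fin.last k)) (Xs 0) g ∧
    φ = CForm.imp (CForm.bigAnd (List.ofFn fs)) (CForm.not g)}

/-- D7 (distribution): `([X ← x]φ ∧ [X ← x](φ ⇒ ψ)) ⇒ [X ← x]ψ`. -/
def AxD7 (S : Signature) : Set (CForm S) :=
  {φ | ∃ (I : S.V → Option S.Val) (hI : I ∈ S.Int) (a b : Event S),
    φ = CForm.imp (CForm.and (CForm.box I hI a) (CForm.box I hI (Event.imp a b)))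
          (CForm.box I hI b)}

/-- D8 (generalization): `[X ← x]φ` for `φ` a propositional tautology. -/
def AxD8 (S : Signature) : Set (CForm S) :=
  {φ | ∃ (I : S.V → Option S.Val) (hI : I ∈ S.Int) (e : Event S), e.Taut ∧
    φ = CForm.box I hI e}

/-- D9 (unique outcomes for `V − {X}`): `⟨Y ← y⟩true ∧ (⟨Y ← y⟩φ ⇒ [Y ← y]φ)`
for `Y = V − {X}`. -/
def AxD9 (S : Signature) : Set (CForm S) :=
  {φ | ∃ (I : S.V → Option S.Val) (hI : I ∈ S.Int) (X : S.V) (e : Event S),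
    I X = none ∧ (∀ Z, Z ≠ X → I Z ≠ none) ∧
    φ = CForm.and (CForm.dia I hI Event.tru)
          (CForm.imp (CForm.dia I hI e) (CForm.box I hI e))}

/-- Halpern's version of D9: `⟨Y ← y⟩true ∧ ⋁_{x ∈ R(X)} [Y ← y](X = x)`
for `Y = V − {X}`. -/
def AxHD9 (S : Signature) : Set (CForm S) :=
  {φ | ∃ (I : S.V → Option S.Val) (hI : I ∈ S.Int) (X : S.V)
      (l : List {x : S.Val // x ∈ S.RV X}),
    I X = none ∧ (∀ Z, Z ≠ X → I Z ≠ none) ∧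
    (∀ x : {x : S.Val // x ∈ S.RV X}, x ∈ l) ∧
    φ = CForm.and (CForm.dia I hI Event.tru)
          (CForm.bigOr (l.map fun x => CForm.box I hI (Event.prim X x.1 x.2)))}

/-- D10(a) (at least one outcome): `⟨Y ← y⟩true`. -/
def AxD10a (S : Signature) : Set (CForm S) :=
  {φ | ∃ (I : S.V → Option S.Val) (hI : I ∈ S.Int), φ = CForm.dia I hI Event.tru}

/-- D10(b) (at most one outcome): `⟨Y ← y⟩φ ⇒ [Y ← y]φ`. -/
def AxD10b (S : Signature) : Set (CForm S) :=
  {φ | ∃ (I : S.V → Option S.Val) (hI : I ∈ S.Int) (e : Event S),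
    φ = CForm.imp (CForm.dia I hI e) (CForm.box I hI e)}

/-! ### The axiom schema D6⁺ -/

/-- `X_{-i} = ȳ` : the conjunction of `X_j = g j` over the indices `j ≠ i`. -/
def Event.conjEqVec {k : ℕ} (Xs : Fin k → S.V)
    (g : ∀ j : Fin k, {x : S.Val // x ∈ S.RV (Xs j)}) (i : Fin k) : Event S :=
  Event.bigAnd (((List.finRange k).filter (fun j => j ≠ i)).map
    fun j => Event.prim (Xs j) (g j).1 (g j).2)

/-- A disjunct of the formula `X_i ⇝_{I',U₁,…,U_k,X₁,…,X_k} X_{−i}`: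
`[I; X_i ← x](X_{−i} = ȳ) ∧ [I; X_i ← x'](X_{−i} ≠ ȳ)`. -/
noncomputable def affComp {k : ℕ} (Xs : Fin k → S.V) (i : Fin k) (I : S.V → Option S.Val)
    (x x' : {v : S.Val // v ∈ S.RV (Xs i)})
    (hx : updInt I (Xs i) x.1 ∈ S.Int) (hx' : updInt I (Xs i) x'.1 ∈ S.Int)
    (g : ∀ j : Fin k, {v : S.Val // v ∈ S.RV (Xs j)}) : CForm S :=
  CForm.and (CForm.box (updInt I (Xs i) x.1) hx (Event.conjEqVec Xs g i))
    (CForm.box (updInt I (Xs i) x'.1) hx' (Event.not (Event.conjEqVec Xs g i)))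

/-- `φ` is (an instance of) the formula `X_i ⇝_{I',U₁,…,U_k,X₁,…,X_k} X_{−i}`. -/
def IsAffects {k : ℕ} (Xs : Fin k → S.V) (Us : Fin k → Set S.Val)
    (Is : Set (S.V → Option S.Val)) (i : Fin k) (φ : CForm S) : Prop :=
  ∃ l : List (CForm S),
    (∀ ψ ∈ l, ∃ (I : S.V → Option S.Val) (x x' : {v : S.Val // v ∈ S.RV (Xs i)})
        (hx : updInt I (Xs i) x.1 ∈ S.Int) (hx' : updInt I (Xs i) x'.1 ∈ S.Int)
        (g : ∀ j : Fin k, {v : S.Val // v ∈ S.RV (Xs j)}),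
        I ∈ Is ∧ x.1 ∈ Us i ∧ x'.1 ∈ Us i ∧ (∀ j, j ≠ i → (g j).1 ∈ Us j) ∧
        ψ = affComp Xs i I x x' hx hx' g) ∧
    (∀ (I : S.V → Option S.Val), I ∈ Is →
      ∀ (x x' : {v : S.Val // v ∈ S.RV (Xs i)})
        (hx : updInt I (Xs i) x.1 ∈ S.Int) (hx' : updInt I (Xs i) x'.1 ∈ S.Int)
        (g : ∀ j : Fin k, {v : S.Val // v ∈ S.RV (Xs j)}),
        x.1 ∈ Us i → x'.1 ∈ Us i → (∀ j, j ≠ i → (g j).1 ∈ Us j) →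
        affComp Xs i I x x' hx hx' g ∈ l) ∧
    φ = CForm.bigOr l

/-- D6⁺: `⋁_{i=1}^k ¬(X_i ⇝_{I',U₁,…,U_k,X₁,…,X_k} X_{−i})`, one instance for
each finite choice of variables `X₁,…,X_k`, finite value sets `U_i ⊆ R(X_i)`,
and finite set `I'` of allowed interventions. -/
def AxD6p (S : Signature) : Set (CForm S) :=
  {φ | ∃ (k : ℕ) (Xs : Fin k → S.V) (Us : Fin k → Set S.Val)
      (Is : Set (S.V → Option S.Val)) (fs : Fin k → CForm S),
    (∀ j, Us j ⊆ S.RV (Xs j)) ∧ (∀ j, (Us j).Finite) ∧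
    Is ⊆ S.Int ∧ Is.Finite ∧
    (∀ i, IsAffects Xs Us Is i (fs i)) ∧
    φ = CForm.bigOr (List.ofFn fun i => CForm.not (fs i))}

/-! ### Axiom systems and provability -/

def AXplus (S : Signature) : Set (CForm S) :=
  AxD0 S ∪ AxD1 S ∪ AxD2 S ∪ AxD3 S ∪ AxD4 S ∪ AxD5 S ∪ AxD7 S ∪ AxD8 S ∪ AxD9 S

def AXplusRec (S : Signature) : Set (CForm S) :=
  AxD0 S ∪ AxD1 S ∪ AxD2 S ∪ AxD3 S ∪ AxD4 S ∪ AxD6 S ∪ AxD7 S ∪ AxD8 S ∪ AxD9 S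
    ∪ AxD10a S ∪ AxD10b S

def AXbasic (S : Signature) : Set (CForm S) :=
  AxD0 S ∪ AxD1 S ∪ AxD2 S ∪ AxD4 S ∪ AxD7 S ∪ AxD8 S

def AXbasicRec (S : Signature) : Set (CForm S) := AXbasic S ∪ AxD6p S

def AXminus (S : Signature) : Set (CForm S) :=
  AxD0 S ∪ AxD2 S ∪ AxD3 S ∪ AxD6 S ∪ AxD7 S ∪ AxD8 S ∪ AxD10a S ∪ AxD10b S

def AXEQ (S : Signature) : Set (CForm S) :=
  AxD0 S ∪ AxD1 S ∪ AxD2 S ∪ AxD7 S ∪ AxD8 S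

/-- Provability from a set of axioms, with modus ponens. -/
inductive Provable (Ax : Set (CForm S)) : CForm S → Prop
  | ax {φ} : φ ∈ Ax → Provable Ax φ
  | mp {φ ψ} : Provable Ax (CForm.imp φ ψ) → Provable Ax φ → Provable Ax ψ

/-- Provability from a set of axioms, with modus ponens and the inference rule
D2⁺, relative to named variables `W`, named values `R'`, and a language `L`. -/
inductive ProvableStar (Ax : Set (CForm S)) (W : Set S.V) (R' : S.V → Set S.Val)
    (L : Set (CForm S)) : CForm S → Prop
  | ax {φ} : φ ∈ Ax → ProvableStar Ax W R' L φ
  | mp {φ ψ} : ProvableStar Ax W R' L (CForm.imp φ ψ) → ProvableStar Ax W R' L φ →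
      ProvableStar Ax W R' L ψ
  | d2plus {φ : CForm S} {I : S.V → Option S.Val} {hI : I ∈ S.Int} {ψ : Event S}
      {X : S.V} (hXW : X ∈ W)
      (l : List {x : S.Val // x ∈ S.RV X})
      (hsub : ∀ x ∈ l, x.1 ∈ R' X)
      (hmem : ∀ (x : S.Val) (hx : x ∈ S.RV X),
        (CForm.imp φ (CForm.box I hI ψ)).mentionsVal X x →
        (⟨x, hx⟩ : {x : S.Val // x ∈ S.RV X}) ∈ l)
      (hfresh : (∃ x ∈ R' X, ¬ (CForm.imp φ (CForm.box I hI ψ)).mentionsVal X x) →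
        ∃ x ∈ l, ¬ (CForm.imp φ (CForm.box I hI ψ)).mentionsVal X x.1)
      (hL : CForm.imp φ (CForm.box I hI (Event.not ψ)) ∈ L)
      (hprem : ProvableStar Ax W R' L
        (CForm.imp φ (CForm.bigAnd (l.map fun x =>
          CForm.box I hI (Event.imp ψ (Event.not (Event.prim X x.1 x.2)))))))
      : ProvableStar Ax W R' L (CForm.imp φ (CForm.box I hI (Event.not ψ)))

/-! ### Properties of GSEMs -/

/-- Coherence: if `v` is an outcome of `X ← x` and `v` agrees with a finite
extension `X ← x; Y ← y` of the intervention, then `v` is an outcome of the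
extended intervention. -/
def GSEM.Coherent (M : GSEM S) : Prop :=
  ∀ (I₁ : S.V → Option S.Val) (h₁ : I₁ ∈ S.Int) (I₂ : S.V → Option S.Val)
    (h₂ : I₂ ∈ S.Int),
    (∀ X x, I₁ X = some x → I₂ X = some x) →
    {X | I₁ X = none ∧ I₂ X ≠ none}.Finite →
    ∀ (u : Context S) (v : Assignment S), v ∈ M.F I₁ h₁ u →
      (∀ X x, I₂ X = some x → v.1 X = x) → v ∈ M.F I₂ h₂ u

/-- Condition Acyc1 for a GSEM, a context, and a strict order on the variables. -/
def GSEM.Acyc1At (M : GSEM S) (u : Context S) (lt : S.V → S.V → Prop) : Prop :=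
  ∀ (X : S.V) (x x' : S.Val), x ∈ S.RV X → x' ∈ S.RV X →
    ∀ (I : S.V → Option S.Val), I ∈ S.Int →
      ∀ (hx : updInt I X x ∈ S.Int) (hx' : updInt I X x' ∈ S.Int),
        restrictSet (M.F (updInt I X x) hx u) {Y | lt Y X}
          = restrictSet (M.F (updInt I X x') hx' u) {Y | lt Y X}

/-- An acyclic GSEM: for each context there is a total order on the endogenous
variables satisfying Acyc1. -/
def GSEM.Acyclic (M : GSEM S) : Prop :=
  ∀ u : Context S, ∃ lt : S.V → S.V → Prop, IsStrictTotalOrder S.V lt ∧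
    M.Acyc1At u lt

/-! ### Consistency and acceptability -/

/-- A set of formulas is consistent with a provability notion `Pr` if the
negation of the conjunction of no finite subset is provable. -/
def Consistent (Pr : CForm S → Prop) (C : Set (CForm S)) : Prop :=
  ∀ l : List (CForm S), (∀ ψ ∈ l, ψ ∈ C) → ¬ Pr (CForm.not (CForm.bigAnd l))

def MaxConsistent (Pr : CForm S → Prop) (C : Set (CForm S)) : Prop :=
  Consistent Pr C ∧ ∀ ψ ∉ C, ¬ Consistent Pr (insert ψ C)

/-- `C` is acceptable for `⟨Y ← y⟩φ` with respect to `Z`: some conjunctive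
formula `ψ` extends the conjuncts of `φ`, contains a conjunct `Z = z` with `z`
a named value, and `⟨Y ← y⟩ψ ∈ C`. -/
def AcceptableFor (C : Set (CForm S)) (I : S.V → Option S.Val) (hI : I ∈ S.Int)
    (φ : Event S) (R' : S.V → Set S.Val) (Z : S.V) : Prop :=
  ∃ ψ : Event S, ψ.Conjunctive ∧ φ.conjuncts ⊆ ψ.conjuncts ∧
    (∃ (z : S.Val) (hz : z ∈ S.RV Z), z ∈ R' Z ∧ Event.prim Z z hz ∈ ψ.conjuncts) ∧
    CForm.dia I hI ψ ∈ C

end Causal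

namespace Causal

/-- The signature with a single context, countably many binary endogenous
variables `X₁, X₂, …`, and only the empty intervention allowed. -/
@[reducible] def infSig : Signature where
  U := Unit
  V := ℕ
  Val := ℕ
  RU := fun _ => {0}
  RV := fun _ => ({0, 1} : Set ℕ)
  RU_nonempty := fun _ => ⟨0, rfl⟩
  RV_nonempty := fun _ => ⟨0, Or.inl rfl⟩
  Int := {I | I = fun _ => none}
  Int_ok := by
    intro I hI X x h
    have hI' : I = fun _ => none := hI
    subst hI'
    simp at h

/-- The GSEM `M` whose outcomes under the empty intervention are all
assignments in which only finitely many variables take the value 0. -/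
def Mfin0 : GSEM infSig where
  F := fun _ _ _ => {v | {i : ℕ | v.1 i = 0}.Finite}
  effective := by
    intro I hI u v _ X x h
    have hI' : I = fun _ => none := hI
    subst hI'
    simp at h

/-- The GSEM `M'` whose outcomes under the empty intervention are all
assignments in which only finitely many variables take the value 1. -/
def Mfin1 : GSEM infSig where
  F := fun _ _ _ => {v | {i : ℕ | v.1 i = 1}.Finite}
  effective := by
    intro I hI u v _ X x h
    have hI' : I = fun _ => none := hI
    subst hI'
    simp at h

/-!
An event mentions only finitely many variables, and both outcome sets realize every
finite pattern of values; so an event holds on all outcomes of `M` iff it is valid,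
iff it holds on all outcomes of `M'`, and the causal formulas agree by induction.
The all-ones assignment lies in `M(u, ∅)` but not in `M'(u, ∅)`.
-/

section FinitelyDense

variable {S : Signature}

def Event.vars : Event S → Set S.V
  | .tru => ∅
  | .prim X _ _ => {X}
  | .not e => e.vars
  | .and a b => a.vars ∪ b.vars
  | .or a b => a.vars ∪ b.vars

theorem Event.vars_finite (e : Event S) : e.vars.Finite := by
  induction e with
  | tru => exact Set.finite_empty
  | prim X _ _ => exact Set.finite_singleton X
  | not _ ih => exact ih
  | and _ _ iha ihb | or _ _ iha ihb => exact iha.union ihb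

theorem Event.sat_congr {v w : Assignment S} :
    ∀ {e : Event S}, (∀ X ∈ e.vars, v.1 X = w.1 X) → (e.sat v ↔ e.sat w)
  | .tru, _ => Iff.rfl
  | .prim X _ _, h => by rw [Event.sat, Event.sat, h X rfl]
  | .not _, h => not_congr (Event.sat_congr h)
  | .and _ _, h => and_congr (Event.sat_congr fun X hX => h X (Or.inl hX))
      (Event.sat_congr fun X hX => h X (Or.inr hX))
  | .or _ _, h => or_congr (Event.sat_congr fun X hX => h X (Or.inl hX))
      (Event.sat_congr fun X hX => h X (Or.inr hX))

def IsFinitelyDense (T : Set (Assignment S)) : Prop :=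
  ∀ W : Set S.V, W.Finite → ∀ w : Assignment S, ∃ v ∈ T, ∀ X ∈ W, v.1 X = w.1 X

theorem Event.forall_sat_iff_of_isFinitelyDense {T : Set (Assignment S)}
    (hT : IsFinitelyDense T) (e : Event S) :
    (∀ v ∈ T, e.sat v) ↔ ∀ v, e.sat v := by
  refine ⟨fun h w => ?_, fun h v _ => h v⟩
  obtain ⟨v, hvT, hvw⟩ := hT e.vars e.vars_finite w
  exact (Event.sat_congr hvw).1 (h v hvT)

theorem CForm.sat_congr_of_box_iff
    {O O' : (I : S.V → Option S.Val) → I ∈ S.Int → Context S → Set (Assignment S)}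
    (u : Context S)
    (hbox : ∀ I hI (e : Event S), (∀ v ∈ O I hI u, e.sat v) ↔ (∀ v ∈ O' I hI u, e.sat v)) :
    ∀ φ : CForm S, φ.sat O u ↔ φ.sat O' u
  | .tru => Iff.rfl
  | .box I hI e => hbox I hI e
  | .not φ => not_congr (CForm.sat_congr_of_box_iff u hbox φ)
  | .and φ ψ => and_congr (CForm.sat_congr_of_box_iff u hbox φ)
      (CForm.sat_congr_of_box_iff u hbox ψ)
  | .or φ ψ => or_congr (CForm.sat_congr_of_box_iff u hbox φ)
      (CForm.sat_congr_of_box_iff u hbox ψ)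

theorem GSEM.LEquiv_of_isFinitelyDense {M M' : GSEM S}
    (hM : ∀ I hI u, IsFinitelyDense (M.F I hI u))
    (hM' : ∀ I hI u, IsFinitelyDense (M'.F I hI u)) :
    M.LEquiv M' := fun u =>
  CForm.sat_congr_of_box_iff u fun I hI e => by
    rw [Event.forall_sat_iff_of_isFinitelyDense (hM I hI u),
      Event.forall_sat_iff_of_isFinitelyDense (hM' I hI u)]

open Classical in
noncomputable def Assignment.piecewise (W : Set S.V) (w d : Assignment S) : Assignment S :=
  ⟨W.piecewise w.1 d.1, fun X => by
    by_cases hX : X ∈ W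
    · simpa [Set.piecewise_eq_of_mem _ _ _ hX] using w.2 X
    · simpa [Set.piecewise_eq_of_notMem _ _ _ hX] using d.2 X⟩

/-- Witness: `w` on the finite set, `d` elsewhere; `d` never takes the value `c`. -/
theorem isFinitelyDense_setOf_finite_eq {c : S.V → S.Val} (d : Assignment S)
    (hd : ∀ X, d.1 X ≠ c X) :
    IsFinitelyDense {v : Assignment S | {X | v.1 X = c X}.Finite} := by
  classical
  intro W hW w
  refine ⟨Assignment.piecewise W w d, hW.subset fun X hX => ?_, fun X hX => ?_⟩
  · by_contra hXW
    exact hd X (by simpa [Assignment.piecewise, Set.piecewise_eq_of_notMem _ _ _ hXW] using hX)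
  · simp [Assignment.piecewise, Set.piecewise_eq_of_mem _ _ _ hX]

end FinitelyDense

def infSig.const (b : ℕ) (hb : b ∈ ({0, 1} : Set ℕ)) : Assignment infSig :=
  ⟨fun _ => b, fun _ => hb⟩

theorem Mfin0_isFinitelyDense (I hI u) : IsFinitelyDense (Mfin0.F I hI u) :=
  isFinitelyDense_setOf_finite_eq (infSig.const 1 (by simp)) fun _ => one_ne_zero

theorem Mfin1_isFinitelyDense (I hI u) : IsFinitelyDense (Mfin1.F I hI u) :=
  isFinitelyDense_setOf_finite_eq (infSig.const 0 (by simp)) fun _ => zero_ne_one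

/-- The two GSEMs `M` and `M'` over the signature with
countably many binary endogenous variables and only the empty intervention
(whose outcomes are, respectively, the assignments with finitely many 0s and
the assignments with finitely many 1s) are `L(S)`-equivalent — they satisfy
exactly the same causal formulas at every context — but they are not
equivalent: their outcome sets differ. -/
theorem inf_models_LEquiv_not_equiv :
    Mfin0.LEquiv Mfin1 ∧ ¬ Mfin0.equiv Mfin1 := by
  refine ⟨GSEM.LEquiv_of_isFinitelyDense Mfin0_isFinitelyDense Mfin1_isFinitelyDense,
    fun h => ?_⟩
  let u : Context infSig := ⟨fun _ => 0, fun _ => rfl⟩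
  have hones : infSig.const 1 (by simp) ∈ Mfin0.F (fun _ => none) rfl u := by
    show {i : ℕ | (1 : ℕ) = 0}.Finite
    simp
  rw [h (fun _ => none) rfl u] at hones
  have hfin : ({i : ℕ | (1 : ℕ) = 1} : Set ℕ).Finite := hones
  exact Set.infinite_univ (by simpa only [Set.ofPred_true] using hfin)

end Causal
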